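/- Let G be a metacyclic group presented as G = ⟨x, y | y^n = 1, x^k = y^ℓ, y x = x y^s⟩ with n | s^k - 1 and n | ℓ(s-1), so that |G| = nk. Then the sequence S = (y repeated n-1 times, then x) repeated k-1 times, followed by y repeated n-1 times, has length nk - 1 and has no nonempty consecutive subsequence with product equal to the identity. Consequently C(G) = |G|. -/

import Mathlib

/-- A list `S` over a monoid has a nonempty consecutive product-one subsequence. -/
def ConsecOne {G : Type*} [Monoid G] (S : List G) : Prop :=
  ∃ T : List G, T ≠ [] ∧ T <:+: S ∧ T.prod = 1

/-- The consecutive Davenport constant `C(G)`. -/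
noncomputable def CDav (G : Type*) [Monoid G] : ℕ :=
  sInf {ℓ : ℕ | ∀ S : List G, ℓ ≤ S.length → ConsecOne S}

/-- A list `S` over a monoid has a nonempty `A`-weighted consecutive product-one subsequence. -/
def WConsecOne {G : Type*} [Monoid G] (A : Set ℕ) (S : List G) : Prop :=
  ∃ T : List (G × ℕ), T ≠ [] ∧ T.map Prod.fst <:+: S ∧ (∀ p ∈ T, p.2 ∈ A) ∧
    (T.map fun p => p.1 ^ p.2).prod = 1

/-- The `A`-weighted consecutive Davenport constant `C_A(G)`. -/
noncomputable def CDavA (A : Set ℕ) (G : Type*) [Monoid G] : ℕ :=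
  sInf {ℓ : ℕ | ∀ S : List G, ℓ ≤ S.length → WConsecOne A S}

section AuxLemmas

variable {G : Type*} [Group G] (n k s : ℕ) (x y : G)

lemma aux_ypow_x (hyx : y * x = x * y ^ s) (b : ℕ) :
    y ^ b * x = x * y ^ (s * b) := by
  induction b with
  | zero => simp
  | succ b ih =>
    calc y ^ (b+1) * x = y ^ b * (y * x) := by rw [pow_succ, mul_assoc]
    _ = y ^ b * x * y ^ s := by rw [hyx, mul_assoc]
    _ = x * y ^ (s*b) * y ^ s := by rw [ih]
    _ = x * y ^ (s*(b+1)) := by rw [mul_assoc, ← pow_add, Nat.mul_succ]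

lemma aux_ypow_xpow (hyx : y * x = x * y ^ s) (b q : ℕ) :
    y ^ b * x ^ q = x ^ q * y ^ (s ^ q * b) := by
  induction q with
  | zero => simp
  | succ q ih =>
    calc y ^ b * x ^ (q+1) = y ^ b * x ^ q * x := by rw [pow_succ, mul_assoc]
    _ = x ^ q * y ^ (s ^ q * b) * x := by rw [ih]
    _ = x ^ q * (x * y ^ (s * (s ^ q * b))) := by rw [mul_assoc, aux_ypow_x s x y hyx]
    _ = x ^ (q+1) * y ^ (s ^ (q+1) * b) := by
        rw [← mul_assoc, ← pow_succ, ← mul_assoc, ← pow_succ']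

/-- Prefix-product formula for the sequence `(y^[n-1] x)^[k] y^[n-1]`. -/
lemma aux_prefix_prod (hn : 0 < n) (hyx : y * x = x * y ^ s) :
    ∀ (k i : ℕ), i ≤ n * (k + 1) - 1 →
    (((List.replicate k (List.replicate (n - 1) y ++ [x])).flatten ++
        List.replicate (n - 1) y).take i).prod
      = x ^ (i / n) * y ^ ((n-1) * s * (∑ t ∈ Finset.range (i / n), s ^ t) + i % n) := by
  intro k
  induction k with
  | zero =>
    intro i hi
    have hi' : i ≤ n - 1 := by omega
    have hdiv : i / n = 0 := Nat.div_eq_of_lt (by omega)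
    have hmod : i % n = i := Nat.mod_eq_of_lt (by omega)
    simp only [List.replicate_zero, List.flatten_nil, List.nil_append,
      List.take_replicate, List.prod_replicate, hdiv, hmod]
    rw [min_eq_left hi']
    simp
  | succ k ih =>
    intro i hi
    rw [List.replicate_succ, List.flatten_cons, List.append_assoc]
    set blk : List G := List.replicate (n - 1) y ++ [x] with hblk
    have hblklen : blk.length = n := by simp [hblk]; omega
    have hblkprod : blk.prod = x * y ^ ((n-1) * s) := by
      rw [hblk, List.prod_append, List.prod_replicate, List.prod_singleton,
        aux_ypow_x s x y hyx, Nat.mul_comm]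
    rcases lt_or_ge i n with hin | hin
    · -- i < n : take stays in the first block
      have h0 : i - blk.length = 0 := by omega
      rw [List.take_append, h0, List.take_zero, List.append_nil,
        hblk, List.take_append, List.take_replicate]
      have h2 : i - (List.replicate (n-1) y).length = 0 := by
        simp only [List.length_replicate]; omega
      rw [h2, List.take_zero, List.append_nil, min_eq_left (by omega : i ≤ n - 1),
        List.prod_replicate, Nat.div_eq_of_lt hin, Nat.mod_eq_of_lt hin]
      simp
    · -- n ≤ i
      have hnk : n * (k + 1 + 1) = n * (k + 1) + n := by ring
      rw [List.take_append, List.take_of_length_le (by rw [hblklen]; exact hin),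
        List.prod_append, hblkprod, hblklen, ih (i - n) (by omega)]
      have hq : i / n = (i - n) / n + 1 := by
        conv_lhs => rw [show i = (i - n) + n by omega]
        exact Nat.add_div_right _ hn
      have hm : i % n = (i - n) % n := by
        conv_lhs => rw [show i = (i - n) + n by omega]
        exact Nat.add_mod_right _ _
      rw [hq, hm, Finset.sum_range_succ]
      set a := (n-1) * s
      set q := (i - n) / n
      set r := (i - n) % n
      set σ := ∑ t ∈ Finset.range q, s ^ t
      calc x * y ^ a * (x ^ q * y ^ (a * σ + r))
          = x * (y ^ a * x ^ q) * y ^ (a * σ + r) := by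
            rw [← mul_assoc, mul_assoc x (y ^ a)]
        _ = x * (x ^ q * y ^ (s ^ q * a)) * y ^ (a * σ + r) := by
            rw [aux_ypow_xpow s x y hyx]
        _ = x ^ (q+1) * y ^ (s ^ q * a + (a * σ + r)) := by
            rw [← mul_assoc, ← pow_succ', mul_assoc, ← pow_add]
        _ = x ^ (q+1) * y ^ (a * (σ + s ^ q) + r) := by
            congr 1
            ring_nf

lemma aux_of_prefix_eq {G : Type*} [Group G] (S : List G) (i j : ℕ) (hij : i < j)
    (hj : j ≤ S.length) (h : (S.take i).prod = (S.take j).prod) : ConsecOne S := by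
  refine ⟨(S.drop i).take (j - i), ?_, ?_, ?_⟩
  · have : ((S.drop i).take (j - i)).length = min (j - i) (S.length - i) := by
      rw [List.length_take, List.length_drop]
    intro hnil
    rw [hnil] at this
    simp at this
    omega
  · exact ((List.take_prefix _ _).isInfix).trans (List.drop_suffix _ _).isInfix
  · have htj : S.take j = S.take i ++ (S.drop i).take (j - i) := by
      conv_lhs => rw [show j = i + (j - i) by omega]
      exact List.take_add
    rw [htj, List.prod_append] at h
    exact (left_eq_mul.mp h)

lemma aux_pigeon {G : Type*} [Group G] [Fintype G] (S : List G)
    (h : Fintype.card G ≤ S.length) : ConsecOne S := by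
  obtain ⟨i, j, hne, hij⟩ := Fintype.exists_ne_map_eq_of_card_lt
    (fun i : Fin (Fintype.card G + 1) => (S.take i).prod) (by simp)
  rcases hne.lt_or_gt with hlt | hlt
  · exact aux_of_prefix_eq S i j hlt (by omega) hij
  · exact aux_of_prefix_eq S j i hlt (by omega) hij.symm

end AuxLemmas

/-- For the metacyclic group `G = ⟨x, y | yⁿ = 1, xᵏ = yˡ, yx = xyˢ⟩`, the sequence
`(y^[n-1] x)^[k-1] y^[n-1]` has length `nk - 1` and is consecutive product-one free;
consequently `C(G) = |G|`. -/
theorem stmt5 {G : Type*} [Group G] [Fintype G] (n k l s : ℕ) (hn : 0 < n) (hk : 0 < k)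
    (x y : G) (hy : y ^ n = 1) (hx : x ^ k = y ^ l) (hyx : y * x = x * y ^ s)
    (hd1 : (n : ℤ) ∣ (s : ℤ) ^ k - 1) (hd2 : (n : ℤ) ∣ (l : ℤ) * ((s : ℤ) - 1))
    (huniq : ∀ g : G, ∃! p : Fin k × Fin n, g = x ^ (p.1 : ℕ) * y ^ (p.2 : ℕ)) :
    ((List.replicate (k - 1) (List.replicate (n - 1) y ++ [x])).flatten ++
        List.replicate (n - 1) y).length = n * k - 1 ∧
      ¬ ConsecOne ((List.replicate (k - 1) (List.replicate (n - 1) y ++ [x])).flatten ++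
        List.replicate (n - 1) y) ∧
      CDav G = Fintype.card G := by
  set S : List G := (List.replicate (k - 1) (List.replicate (n - 1) y ++ [x])).flatten ++
      List.replicate (n - 1) y with hS
  -- length
  have hlen : S.length = n * k - 1 := by
    rw [hS]
    rw [List.length_append, List.length_flatten, List.length_replicate]
    have h1 : List.map List.length (List.replicate (k-1) (List.replicate (n - 1) y ++ [x]))
        = List.replicate (k-1) n := by
      rw [List.map_replicate]
      congr 1
      simp
      omega
    rw [h1, List.sum_replicate, smul_eq_mul]
    have h2 : (k-1) * n = k * n - n := by rw [Nat.sub_mul, Nat.one_mul]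
    have h3 : n ≤ k * n := Nat.le_mul_of_pos_left n hk
    have h4 : n * k = k * n := Nat.mul_comm n k
    omega
  -- reduce y exponents mod n
  have hyE : ∀ E : ℕ, y ^ E = y ^ (E % n) := by
    intro E
    conv_lhs => rw [← Nat.div_add_mod E n, pow_add, pow_mul, hy, one_pow, one_mul]
  -- key injectivity of prefix products
  have hkey : ∀ i j : ℕ, i ≤ n * k - 1 → j ≤ n * k - 1 →
      (S.take i).prod = (S.take j).prod → i = j := by
    intro i j hi hj hprod
    have hk1 : k - 1 + 1 = k := by omega
    have hfi := aux_prefix_prod n s x y hn hyx (k-1) i (by rw [hk1]; exact hi)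
    have hfj := aux_prefix_prod n s x y hn hyx (k-1) j (by rw [hk1]; exact hj)
    rw [hS] at hprod
    rw [hfi, hfj] at hprod
    have hnk1 : 1 ≤ n * k := Nat.one_le_iff_ne_zero.mpr (by positivity)
    have hik : i / n < k := (Nat.div_lt_iff_lt_mul hn).mpr (by
      have : n * k = k * n := Nat.mul_comm n k
      omega)
    have hjk : j / n < k := (Nat.div_lt_iff_lt_mul hn).mpr (by
      have : n * k = k * n := Nat.mul_comm n k
      omega)
    set Ei := (n-1) * s * (∑ t ∈ Finset.range (i / n), s ^ t) + i % n with hEi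
    set Ej := (n-1) * s * (∑ t ∈ Finset.range (j / n), s ^ t) + j % n with hEj
    have h1 : x ^ (i/n) * y ^ Ei = x ^ ((⟨i/n, hik⟩ : Fin k) : ℕ) *
        y ^ ((⟨Ei % n, Nat.mod_lt _ hn⟩ : Fin n) : ℕ) := by
      rw [hyE Ei]
    have h2 : x ^ (i/n) * y ^ Ei = x ^ ((⟨j/n, hjk⟩ : Fin k) : ℕ) *
        y ^ ((⟨Ej % n, Nat.mod_lt _ hn⟩ : Fin n) : ℕ) := by
      rw [hprod, hyE Ej]
    have h12 : (((⟨i/n, hik⟩ : Fin k), (⟨Ei % n, Nat.mod_lt _ hn⟩ : Fin n)) : Fin k × Fin n)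
        = ((⟨j/n, hjk⟩ : Fin k), (⟨Ej % n, Nat.mod_lt _ hn⟩ : Fin n)) :=
      (huniq (x ^ (i/n) * y ^ Ei)).unique h1 h2
    rw [Prod.mk.injEq, Fin.mk.injEq, Fin.mk.injEq] at h12
    obtain ⟨hdiv, hmod⟩ := h12
    -- from Ei % n = Ej % n and i/n = j/n, get i % n = j % n
    have hmodeq : i % n ≡ j % n [MOD n] := by
      have h3 : Ei ≡ Ej [MOD n] := hmod
      rw [hEi, hEj, hdiv] at h3
      exact (Nat.ModEq.add_left_cancel' _ h3)
    have : i % n = j % n := by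
      have h4 : (i % n) % n = (j % n) % n := hmodeq
      rwa [Nat.mod_mod_of_dvd _ dvd_rfl, Nat.mod_mod_of_dvd _ dvd_rfl] at h4
    calc i = n * (i / n) + i % n := (Nat.div_add_mod i n).symm
      _ = n * (j / n) + j % n := by rw [hdiv, this]
      _ = j := Nat.div_add_mod j n
  -- part B
  have hB : ¬ ConsecOne S := by
    rintro ⟨T, hTne, ⟨u, v, huv⟩, hTprod⟩
    have hlen2 : u.length + (T.length + v.length) = n * k - 1 := by
      simpa [List.length_append, hlen] using congrArg List.length huv
    have hTpos : 0 < T.length := List.length_pos_iff.mpr hTne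
    have htake_i : S.take u.length = u := by
      conv_lhs => rw [← huv, List.append_assoc]
      exact List.take_left
    have htake_j : S.take (u.length + T.length) = u ++ T := by
      conv_lhs => rw [← huv]
      rw [← @List.length_append _ u T, List.take_left]
    have heq : (S.take u.length).prod = (S.take (u.length + T.length)).prod := by
      rw [htake_i, htake_j, List.prod_append, hTprod, mul_one]
    have := hkey u.length (u.length + T.length) (by omega) (by omega) heq
    omega
  -- part C
  have hcard : Fintype.card G = k * n := by
    have hbij : Function.Bijective (fun p : Fin k × Fin n => x ^ (p.1 : ℕ) * y ^ (p.2 : ℕ)) := by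
      constructor
      · intro p q hpq
        exact (huniq (x ^ (p.1 : ℕ) * y ^ (p.2 : ℕ))).unique rfl hpq
      · intro g
        obtain ⟨p, hp, -⟩ := huniq g
        exact ⟨p, hp.symm⟩
    calc Fintype.card G = Fintype.card (Fin k × Fin n) := (Fintype.card_of_bijective hbij).symm
      _ = k * n := by simp
  have hmem : n * k ∈ {ℓ : ℕ | ∀ S' : List G, ℓ ≤ S'.length → ConsecOne S'} := by
    intro S' hS'
    apply aux_pigeon
    rw [hcard, Nat.mul_comm k n]
    exact hS'
  have hCDav : CDav G = n * k := by
    unfold CDav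
    apply le_antisymm
    · exact Nat.sInf_le hmem
    · apply le_csInf ⟨_, hmem⟩
      intro m hm
      by_contra hlt
      push_neg at hlt
      have hmlen : m ≤ S.length := by rw [hlen]; omega
      exact hB (hm S hmlen)
  exact ⟨hlen, hB, by rw [hCDav, hcard, Nat.mul_comm k n]⟩
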